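/- arXiv:1804.06713 — 3 statements merged into one kernel-verified Lean document; each statement's English description precedes it below -/
import Mathlib

section
/- Let ω₃ : ℝ → Matrix (Fin n) (Fin m) ℝ be defined by ω₃(τ) = ∫_{-τ}^{0} ω₁(τ+θ) · C · exp(A·θ) dθ, where ω₁ : ℝ → Matrix (Fin n) (Fin n) ℝ is continuous, C is an n×m matrix, and A is an m×m matrix. Then ω₃(0) = 0 and ω₃ satisfies the ODE ω₃'(τ) = -ω₃(τ)·A + ω₁(τ)·C for all τ. -/
/-!
Substituting `s = τ + θ` and splitting `exp (θ • A) = exp (s • A) * exp ((-τ) • A)` turns `ω₃ τ`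
into `(∫ s in 0..τ, ω₁ s * C * exp (s • A)) * exp ((-τ) • A)`; the fundamental theorem of calculus
and the product rule then give `ω₃' = -ω₃ * A + ω₁ * C`. Only the fact that `exp (θ • A)` acts on
the right enters, so the computation holds for any bounded bilinear right action `B` of a real
Banach algebra; for matrices this is `vecMul` on each row of `ω₁ * C`.
-/

open Matrix NormedSpace intervalIntegral

namespace NormedSpace

variable {𝔸 : Type*} [NormedRing 𝔸] [NormedAlgebra ℝ 𝔸] [CompleteSpace 𝔸]

theorem exp_add_smul (s t : ℝ) (a : 𝔸) : exp ((s + t) • a) = exp (s • a) * exp (t • a) := by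
  have hmem : ∀ x : 𝔸, x ∈ Metric.eball (0 : 𝔸) (expSeries ℝ 𝔸).radius := fun x => by
    simp [expSeries_radius_eq_top]
  rw [add_smul, exp_add_of_commute_of_mem_ball (((Commute.refl a).smul_left s).smul_right t)
    (hmem _) (hmem _)]

theorem continuous_exp_smul_const (a : 𝔸) : Continuous fun t : ℝ => exp (t • a) :=
  continuous_iff_continuousAt.2 fun t => (hasDerivAt_exp_smul_const a t).continuousAt

end NormedSpace

section RightAction

variable {𝔸 E : Type*} [NormedRing 𝔸] [NormedAlgebra ℝ 𝔸] [CompleteSpace 𝔸]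
  [NormedAddCommGroup E] [NormedSpace ℝ E] [CompleteSpace E]
  {B : E →L[ℝ] 𝔸 →L[ℝ] E} {f : ℝ → E}

theorem integral_comp_add_exp_smul (hB : ∀ x u v, B (B x u) v = B x (u * v))
    (hf : Continuous f) (a : 𝔸) (t : ℝ) :
    ∫ θ in (-t)..0, B (f (t + θ)) (exp (θ • a)) =
      B (∫ s in (0 : ℝ)..t, B (f s) (exp (s • a))) (exp ((-t) • a)) := by
  have hcont : Continuous fun s => B (f s) (exp (s • a)) :=
    B.continuous₂.comp (hf.prodMk (continuous_exp_smul_const a))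
  have hpull : ∫ s in (0 : ℝ)..t, B (B (f s) (exp (s • a))) (exp ((-t) • a)) =
      B (∫ s in (0 : ℝ)..t, B (f s) (exp (s • a))) (exp ((-t) • a)) :=
    (B.flip _).intervalIntegral_comp_comm (hcont.intervalIntegrable 0 t)
  have hsplit (θ : ℝ) : B (f (t + θ)) (exp (θ • a)) =
      B (B (f (t + θ)) (exp ((t + θ) • a))) (exp ((-t) • a)) := by
    rw [hB, ← exp_add_smul, add_neg_cancel_comm]
  simp_rw [hsplit, ← hpull]
  rw [integral_comp_add_left (fun s => B (B (f s) (exp (s • a))) (exp ((-t) • a))) t,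
    add_neg_cancel, add_zero]

theorem hasDerivAt_integral_comp_add_exp_smul (hB : ∀ x u v, B (B x u) v = B x (u * v))
    (hB₁ : ∀ x, B x 1 = x) (hf : Continuous f) (a : 𝔸) (t : ℝ) :
    HasDerivAt (fun τ => ∫ θ in (-τ)..0, B (f (τ + θ)) (exp (θ • a)))
      (-B (∫ θ in (-t)..0, B (f (t + θ)) (exp (θ • a))) a + f t) t := by
  have hcont : Continuous fun s => B (f s) (exp (s • a)) :=
    B.continuous₂.comp (hf.prodMk (continuous_exp_smul_const a))
  have hprimitive := (hcont.integral_hasStrictDerivAt 0 t).hasDerivAt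
  have hexp : HasDerivAt (fun τ : ℝ => exp ((-τ) • a)) (exp ((-t) • a) * -a) t := by
    simpa only [neg_smul, smul_neg] using hasDerivAt_exp_smul_const (-a) t
  simp_rw [integral_comp_add_exp_smul hB hf a]
  convert B.hasDerivAt_of_bilinear (fun _ => hprimitive) (fun _ => hexp) using 1
  rw [hB, hB, ← exp_add_smul, add_neg_cancel, zero_smul, exp_zero, hB₁, mul_neg, map_neg,
    add_comm]

end RightAction

attribute [local instance] Matrix.linftyOpNormedAddCommGroup Matrix.linftyOpNormedRing
  Matrix.linftyOpNormedAlgebra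

noncomputable def Matrix.vecMulCLM {m : Type*} [Fintype m] :
    (m → ℝ) →L[ℝ] Matrix m m ℝ →L[ℝ] (m → ℝ) :=
  LinearMap.toContinuousLinearMap
    (LinearMap.toContinuousLinearMap.toLinearMap ∘ₗ vecMulBilin ℝ ℝ)

/-- If `ω₃(τ) = ∫_{-τ}^{0} ω₁(τ+θ)·C·exp(A·θ) dθ` (entrywise), with `ω₁` continuous,
then `ω₃ 0 = 0` and `ω₃' = -ω₃·A + ω₁·C`. -/
theorem stmt2 {n m : ℕ} (A : Matrix (Fin m) (Fin m) ℝ) (C : Matrix (Fin n) (Fin m) ℝ)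
    (ω₁ : ℝ → Matrix (Fin n) (Fin n) ℝ)
    (hω₁ : ∀ i j : Fin n, Continuous fun τ : ℝ => ω₁ τ i j)
    (ω₃ : ℝ → Matrix (Fin n) (Fin m) ℝ)
    (hω₃ : ∀ (τ : ℝ) (i : Fin n) (j : Fin m),
      ω₃ τ i j = ∫ θ in (-τ)..0, (ω₁ (τ + θ) * C * NormedSpace.exp (θ • A)) i j) :
    ω₃ 0 = 0 ∧
      ∀ (τ : ℝ) (i : Fin n) (j : Fin m),
        HasDerivAt (fun t : ℝ => ω₃ t i j) ((-(ω₃ τ * A) + ω₁ τ * C) i j) τ := by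
  refine ⟨by ext i j; simp [hω₃], fun τ i j => ?_⟩
  have hrow_cont : Continuous fun s => (ω₁ s * C) i :=
    continuous_pi fun k => ((continuous_matrix hω₁).matrix_mul continuous_const).matrix_elem i k
  set F : ℝ → Fin m → ℝ := fun t =>
    ∫ θ in (-t)..0, vecMulCLM ((ω₁ (t + θ) * C) i) (exp (θ • A))
  have hrow : (fun t => ω₃ t i) = F := by
    ext t j
    have hint : Continuous fun θ => vecMulCLM ((ω₁ (t + θ) * C) i) (exp (θ • A)) :=
      (vecMulCLM.continuous.comp (hrow_cont.comp (continuous_const_add t))).clm_apply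
        (continuous_exp_smul_const A)
    rw [hω₃]
    exact ContinuousLinearMap.intervalIntegral_comp_comm
      (ContinuousLinearMap.proj (R := ℝ) (φ := fun _ : Fin m => ℝ) j) (hint.intervalIntegrable _ _)
  -- `exp` in `F` uses the product topology on matrices, the lemma the norm topology; they agree
  -- only up to unfolding, hence the type ascription instead of a rewrite.
  have hderiv : HasDerivAt F (-vecMulCLM (F τ) A + (ω₁ τ * C) i) τ :=
    hasDerivAt_integral_comp_add_exp_smul (fun v M N => vecMul_vecMul v M N) vecMul_one
      hrow_cont A τ
  rw [← hrow] at hderiv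
  exact hasDerivAt_pi.1 hderiv j
end

section
/- Let ω₅ : ℝ → Matrix (Fin m) (Fin n) ℝ be defined by ω₅(τ) = ∫_{-h}^{-h+τ} (C·exp(A·θ))ᵀ · ω₁(τ-θ-h) dθ, where ω₁ : ℝ → Matrix (Fin n) (Fin n) ℝ is continuous, C is an n×m matrix, A is an m×m matrix, and h ≥ 0. Then ω₅(0) = 0 and ω₅'(τ) = Aᵀ·ω₅(τ) + (C·exp(-A·h))ᵀ·ω₁(τ) for all τ. -/
/-!
Substituting `s = τ - θ - h` turns `ω₅` into the variation-of-constants integral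
`∫₀^τ exp((τ - s) Aᵀ) g(s) ds` with `g(s) = (C exp(-h A))ᵀ ω₁(s)`, i.e. the solution of
`X' = Aᵀ X + g`, `X(0) = 0`. Since `exp((τ - s) B) = exp(τ B) exp(-s B)`, that integral is
`exp(τ B) ∫₀^τ exp(-s B) g(s) ds`, which is differentiated by the product rule and the
fundamental theorem of calculus.
-/

open Matrix

section MatrixCalculus

variable {l m n : Type*} [Fintype m]

theorem hasDerivAt_matrix_mul_apply {F : ℝ → Matrix l m ℝ} {G : ℝ → Matrix m n ℝ}
    {F' : Matrix l m ℝ} {G' : Matrix m n ℝ} {τ : ℝ}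
    (hF : ∀ i k, HasDerivAt (fun t => F t i k) (F' i k) τ)
    (hG : ∀ k j, HasDerivAt (fun t => G t k j) (G' k j) τ) (i : l) (j : n) :
    HasDerivAt (fun t => (F t * G t) i j) ((F' * G τ + F τ * G') i j) τ := by
  simp only [mul_apply, Matrix.add_apply, ← Finset.sum_add_distrib]
  exact HasDerivAt.fun_sum fun k _ => (hF i k).fun_mul (hG k j)

theorem intervalIntegral_matrix_mul_apply (M : Matrix l m ℝ) {g : ℝ → Matrix m n ℝ} {a b : ℝ}
    (hg : ∀ k j, IntervalIntegrable (fun s => g s k j) MeasureTheory.volume a b) (i : l) (j : n) :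
    ∫ s in a..b, (M * g s) i j = (M * of fun k j => ∫ s in a..b, g s k j) i j := by
  simp only [mul_apply, of_apply]
  rw [intervalIntegral.integral_finsetSum fun k _ => (hg k j).const_mul (M i k)]
  simp only [intervalIntegral.integral_const_mul]

variable [DecidableEq m]

theorem Matrix.exp_add_smul (B : Matrix m m ℝ) (a b : ℝ) :
    NormedSpace.exp ((a + b) • B) = NormedSpace.exp (a • B) * NormedSpace.exp (b • B) := by
  rw [add_smul]
  exact exp_add_of_commute _ _ (((Commute.refl B).smul_left a).smul_right b)

theorem Matrix.exp_smul_transpose (B : Matrix m m ℝ) (t : ℝ) :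
    NormedSpace.exp (t • Bᵀ) = (NormedSpace.exp (t • B))ᵀ := by
  rw [← transpose_smul, exp_transpose]

theorem Matrix.exp_smul_mul_exp_neg_smul (B : Matrix m m ℝ) (t : ℝ) :
    NormedSpace.exp (t • B) * NormedSpace.exp ((-t) • B) = 1 := by
  rw [← exp_add_smul, add_neg_cancel, zero_smul, NormedSpace.exp_zero]

theorem hasDerivAt_exp_smul_apply (B : Matrix m m ℝ) (τ : ℝ) (i k : m) :
    HasDerivAt (fun t : ℝ => NormedSpace.exp (t • B) i k)
      ((B * NormedSpace.exp (τ • B)) i k) τ := by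
  -- `NormedSpace.exp` only sees the topology, so any normed-algebra structure will do.
  let _ : NormedRing (Matrix m m ℝ) := Matrix.linftyOpNormedRing
  let _ : NormedAlgebra ℝ (Matrix m m ℝ) := Matrix.linftyOpNormedAlgebra
  exact (entryLinearMap ℝ ℝ i k).toContinuousLinearMap.hasFDerivAt.comp_hasDerivAt τ
    (hasDerivAt_exp_smul_const' B τ)

theorem continuous_exp_smul (B : Matrix m m ℝ) :
    Continuous fun t : ℝ => NormedSpace.exp (t • B) :=
  continuous_matrix fun i k => continuous_iff_continuousAt.2 fun τ =>
    (hasDerivAt_exp_smul_apply B τ i k).continuousAt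

noncomputable def duhamel (B : Matrix m m ℝ) (g : ℝ → Matrix m n ℝ) (t : ℝ) : Matrix m n ℝ :=
  of fun i j => ∫ s in 0..t, (NormedSpace.exp ((t - s) • B) * g s) i j

variable (B : Matrix m m ℝ) {g : ℝ → Matrix m n ℝ}

theorem duhamel_zero : duhamel B g 0 = 0 := by
  ext i j
  simp [duhamel]

theorem continuous_exp_neg_smul_mul (hg : Continuous g) :
    Continuous fun s => NormedSpace.exp ((-s) • B) * g s :=
  ((continuous_exp_smul B).comp continuous_neg).matrix_mul hg

theorem duhamel_eq_exp_smul_mul (hg : Continuous g) (t : ℝ) :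
    duhamel B g t = NormedSpace.exp (t • B) *
      of fun k j => ∫ s in 0..t, (NormedSpace.exp ((-s) • B) * g s) k j := by
  ext i j
  rw [← intervalIntegral_matrix_mul_apply _
    fun k j => ((continuous_exp_neg_smul_mul B hg).matrix_elem k j).intervalIntegrable 0 t]
  simp only [duhamel, of_apply, sub_eq_add_neg, exp_add_smul, Matrix.mul_assoc]

theorem hasDerivAt_duhamel_apply (hg : Continuous g) (τ : ℝ) (i : m) (j : n) :
    HasDerivAt (fun t => duhamel B g t i j) ((B * duhamel B g τ + g τ) i j) τ := by
  have hcont := continuous_exp_neg_smul_mul B hg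
  have hint : ∀ k j, HasDerivAt (fun t => ∫ s in 0..t, (NormedSpace.exp ((-s) • B) * g s) k j)
      ((NormedSpace.exp ((-τ) • B) * g τ) k j) τ := fun k j =>
    ((hcont.matrix_elem k j).integral_hasStrictDerivAt 0 τ).hasDerivAt
  simp_rw [duhamel_eq_exp_smul_mul B hg]
  refine (hasDerivAt_matrix_mul_apply (hasDerivAt_exp_smul_apply B τ)
    (G := fun t => of fun k j => ∫ s in 0..t, (NormedSpace.exp ((-s) • B) * g s) k j) hint i j
    ).congr_deriv ?_
  rw [Matrix.mul_assoc B, ← Matrix.mul_assoc (NormedSpace.exp (τ • B)),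
    exp_smul_mul_exp_neg_smul, Matrix.one_mul]

end MatrixCalculus

theorem stmt3_general {n m : ℕ} (A : Matrix (Fin m) (Fin m) ℝ) (C : Matrix (Fin n) (Fin m) ℝ)
    (h : ℝ)
    (ω₁ : ℝ → Matrix (Fin n) (Fin n) ℝ)
    (hω₁ : ∀ i j : Fin n, Continuous fun τ : ℝ => ω₁ τ i j)
    (ω₅ : ℝ → Matrix (Fin m) (Fin n) ℝ)
    (hω₅ : ∀ (τ : ℝ) (i : Fin m) (j : Fin n),
      ω₅ τ i j = ∫ θ in (-h)..(-h + τ),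
        ((C * NormedSpace.exp (θ • A))ᵀ * ω₁ (τ - θ - h)) i j) :
    ω₅ 0 = 0 ∧
      ∀ (τ : ℝ) (i : Fin m) (j : Fin n),
        HasDerivAt (fun t : ℝ => ω₅ t i j)
          ((Aᵀ * ω₅ τ + (C * NormedSpace.exp ((-h) • A))ᵀ * ω₁ τ) i j) τ := by
  have hg : Continuous fun s => (C * NormedSpace.exp ((-h) • A))ᵀ * ω₁ s :=
    continuous_const.matrix_mul (continuous_matrix hω₁)
  obtain rfl : ω₅ = duhamel Aᵀ fun s => (C * NormedSpace.exp ((-h) • A))ᵀ * ω₁ s := by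
    ext τ i j
    have hsub (θ : ℝ) : ((C * NormedSpace.exp (θ • A))ᵀ * ω₁ (τ - θ - h)) i j =
        (NormedSpace.exp ((τ - (τ - h - θ)) • Aᵀ) *
          ((C * NormedSpace.exp ((-h) • A))ᵀ * ω₁ (τ - h - θ))) i j := by
      rw [show τ - (τ - h - θ) = h + θ by ring, sub_right_comm, exp_smul_transpose,
        ← Matrix.mul_assoc, ← transpose_mul, Matrix.mul_assoc, ← exp_add_smul,
        neg_add_cancel_left]
    rw [hω₅, duhamel, of_apply, funext hsub, intervalIntegral.integral_comp_sub_left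
      (fun s => (NormedSpace.exp ((τ - s) • Aᵀ) *
        ((C * NormedSpace.exp ((-h) • A))ᵀ * ω₁ s)) i j)]
    congr 1 <;> ring
  exact ⟨duhamel_zero _, hasDerivAt_duhamel_apply _ hg⟩

/-- If `ω₅(τ) = ∫_{-h}^{-h+τ} (C·exp(A·θ))ᵀ·ω₁(τ-θ-h) dθ` (entrywise), with `ω₁`
continuous and `h ≥ 0`, then `ω₅ 0 = 0` and `ω₅' = Aᵀ·ω₅ + (C·exp(-A·h))ᵀ·ω₁`. -/
theorem stmt3 {n m : ℕ} (A : Matrix (Fin m) (Fin m) ℝ) (C : Matrix (Fin n) (Fin m) ℝ)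
    (h : ℝ) (hh : 0 ≤ h)
    (ω₁ : ℝ → Matrix (Fin n) (Fin n) ℝ)
    (hω₁ : ∀ i j : Fin n, Continuous fun τ : ℝ => ω₁ τ i j)
    (ω₅ : ℝ → Matrix (Fin m) (Fin n) ℝ)
    (hω₅ : ∀ (τ : ℝ) (i : Fin m) (j : Fin n),
      ω₅ τ i j = ∫ θ in (-h)..(-h + τ),
        ((C * NormedSpace.exp (θ • A))ᵀ * ω₁ (τ - θ - h)) i j) :
    ω₅ 0 = 0 ∧
      ∀ (τ : ℝ) (i : Fin m) (j : Fin n),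
        HasDerivAt (fun t : ℝ => ω₅ t i j)
          ((Aᵀ * ω₅ τ + (C * NormedSpace.exp ((-h) • A))ᵀ * ω₁ τ) i j) τ :=
  stmt3_general A C h ω₁ hω₁ ω₅ hω₅
end

section
/- Suppose λ is a complex number, h ≥ 0, v₁, v₂ are nonzero vectors in ℂⁿ satisfying v₁ᵀ·(λ·I - A₀ - e^{-λh}·A₁ - ∫_{-h}^{0} e^{λθ}·A_D(θ) dθ) = 0 and v₂ᵀ·(-λ·I - A₀ - e^{λh}·A₁ - ∫_{-h}^{0} e^{-λθ}·A_D(θ) dθ) = 0, where A_D : ℝ → Matrix (Fin n) (Fin n) ℂ is continuous. Then ω₁(τ) := e^{λτ}·v₂·v₁ᵀ satisfies the delay differential equation ω₁'(τ) = ω₁(τ)·A₀ + ω₁(τ-h)·A₁ + ∫_{-h}^{0} ω₁(τ+θ)·A_D(θ) dθ for all τ ∈ ℝ. -/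
open Matrix

/-
The rank-one matrix `ω₁(τ) = e^{λτ} v₂ v₁ᵀ` satisfies `ω₁(τ) M = e^{λτ} v₂ (v₁ᵀ M)` for every
matrix `M`, so the right-hand side of the delay equation at `τ` is `e^{λτ} v₂ (v₁ᵀ C)`, where
`C = A₀ + e^{-λh} A₁ + ∫_{-h}^0 e^{λθ} A_D(θ) dθ` is what the characteristic matrix at `λ` subtracts
from `λ I`. The left eigenvector equation says `v₁ᵀ C = λ v₁ᵀ`, and `λ e^{λτ} v₂ v₁ᵀ` is the
derivative of `ω₁`.
-/

section RankOne

variable {m : Type*} [Fintype m]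

theorem vecMul_eq_smul_of_vecMul_smul_one_sub_eq_zero {R : Type*} [CommRing R] [DecidableEq m]
    {v : m → R} {lam : R} {C : Matrix m m R} (hv : v ᵥ* (lam • (1 : Matrix m m R) - C) = 0) :
    v ᵥ* C = lam • v := by
  rwa [vecMul_sub, vecMul_smul, vecMul_one, sub_eq_zero, eq_comm] at hv

theorem of_integral_smul_vecMulVec_mul (c : ℂ) (f : ℝ → ℂ) (u v : m → ℂ)
    (M : ℝ → Matrix m m ℂ) {a b : ℝ}
    (hM : ∀ k j, IntervalIntegrable (fun θ => f θ * M θ k j) MeasureTheory.volume a b) :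
    (of fun i j => ∫ θ in a..b, ((c * f θ) • vecMulVec u v * M θ) i j) =
      c • vecMulVec u (v ᵥ* of fun k j => ∫ θ in a..b, f θ * M θ k j) := by
  ext i j
  have hentry : ∀ θ, ((c * f θ) • vecMulVec u v * M θ) i j =
      ∑ k, c * u i * (v k * (f θ * M θ k j)) := fun θ => by
    simp only [mul_apply, Matrix.smul_apply, vecMulVec_apply, smul_eq_mul]
    exact Finset.sum_congr rfl fun k _ => by ring
  simp only [of_apply, hentry, Matrix.smul_apply, vecMulVec_apply, vecMul, dotProduct,
    smul_eq_mul, Finset.mul_sum]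
  rw [intervalIntegral.integral_finsetSum fun k _ => ((hM k j).const_mul (v k)).const_mul _]
  refine Finset.sum_congr rfl fun k _ => ?_
  rw [intervalIntegral.integral_const_mul, intervalIntegral.integral_const_mul, mul_assoc]

end RankOne

theorem hasDerivAt_cexp_mul_ofReal_mul (lam c : ℂ) (τ : ℝ) :
    HasDerivAt (fun t : ℝ => Complex.exp (lam * t) * c) (Complex.exp (lam * τ) * (lam * c)) τ := by
  have hlin : HasDerivAt (fun t : ℝ => lam * (t : ℂ)) lam τ := by
    simpa using Complex.ofRealCLM.hasDerivAt.const_mul lam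
  simpa [mul_assoc] using hlin.cexp.mul_const c

theorem stmt6_general {n : ℕ} (A₀ A₁ : Matrix (Fin n) (Fin n) ℂ)
    (AD : ℝ → Matrix (Fin n) (Fin n) ℂ)
    (hAD : ∀ i j : Fin n, Continuous fun θ : ℝ => AD θ i j)
    (lam : ℂ) (h : ℝ)
    (v₁ v₂ : Fin n → ℂ)
    (heig₁ : Matrix.vecMul v₁
      (lam • (1 : Matrix (Fin n) (Fin n) ℂ) - A₀ - Complex.exp (-lam * h) • A₁ -
        Matrix.of fun i j : Fin n => ∫ θ in (-h)..0, Complex.exp (lam * θ) * AD θ i j) = 0)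
    (ω₁ : ℝ → Matrix (Fin n) (Fin n) ℂ)
    (hω₁ : ∀ τ : ℝ, ω₁ τ = Complex.exp (lam * τ) • Matrix.vecMulVec v₂ v₁) :
    ∀ (τ : ℝ) (i j : Fin n),
      HasDerivAt (fun t : ℝ => ω₁ t i j)
        ((ω₁ τ * A₀ + ω₁ (τ - h) * A₁ +
          Matrix.of fun i j : Fin n => ∫ θ in (-h)..0, (ω₁ (τ + θ) * AD θ) i j) i j) τ := by
  intro τ i j
  have hexp : ∀ θ : ℝ,
      Complex.exp (lam * ↑(τ + θ)) = Complex.exp (lam * τ) * Complex.exp (lam * θ) := fun θ => by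
    rw [← Complex.exp_add, Complex.ofReal_add, mul_add]
  have hdelay : Complex.exp (lam * ↑(τ - h)) = Complex.exp (lam * τ) * Complex.exp (-lam * h) := by
    rw [← Complex.exp_add, Complex.ofReal_sub]
    ring_nf
  have hintegral := of_integral_smul_vecMulVec_mul (Complex.exp (lam * τ))
    (fun θ : ℝ => Complex.exp (lam * θ)) v₂ v₁ AD (a := -h) (b := 0) fun k j =>
      (((Complex.continuous_exp.comp (continuous_const.mul Complex.continuous_ofReal)).mul
        (hAD k j)).intervalIntegrable _ _)
  set J := Matrix.of fun k j : Fin n => ∫ θ in (-h)..0, Complex.exp (lam * θ) * AD θ k j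
  have hrow : v₁ ᵥ* (A₀ + Complex.exp (-lam * h) • A₁ + J) = lam • v₁ :=
    vecMul_eq_smul_of_vecMul_smul_one_sub_eq_zero (by rwa [← sub_sub, ← sub_sub])
  have hrhs : ω₁ τ * A₀ + ω₁ (τ - h) * A₁ +
      (Matrix.of fun i j : Fin n => ∫ θ in (-h)..0, (ω₁ (τ + θ) * AD θ) i j) =
        Complex.exp (lam * τ) • vecMulVec v₂ (lam • v₁) := by
    simp only [hω₁, hexp, hdelay]
    rw [hintegral, ← hrow]
    simp only [smul_mul, vecMulVec_mul, mul_smul, vecMul_add, vecMul_smul, vecMulVec_add,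
      vecMulVec_smul, smul_add]
  rw [hrhs]
  simp only [hω₁, Matrix.smul_apply, vecMulVec_apply, Pi.smul_apply, smul_eq_mul]
  exact (hasDerivAt_cexp_mul_ofReal_mul lam (v₂ i * v₁ j) τ).congr_deriv (by ring)

/-- If `v₁ ≠ 0`, `v₂ ≠ 0` are left eigen-row-vectors of the characteristic matrices at
`λ` and `-λ` respectively, then `ω₁(τ) = e^{λτ}·v₂·v₁ᵀ` satisfies the delay differential
equation `ω₁' = ω₁·A₀ + ω₁(·-h)·A₁ + ∫_{-h}^0 ω₁(·+θ)·A_D(θ) dθ` (entrywise). -/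
theorem stmt6 {n : ℕ} (A₀ A₁ : Matrix (Fin n) (Fin n) ℂ)
    (AD : ℝ → Matrix (Fin n) (Fin n) ℂ)
    (hAD : ∀ i j : Fin n, Continuous fun θ : ℝ => AD θ i j)
    (lam : ℂ) (h : ℝ) (hh : 0 ≤ h)
    (v₁ v₂ : Fin n → ℂ) (hv₁ : v₁ ≠ 0) (hv₂ : v₂ ≠ 0)
    (heig₁ : Matrix.vecMul v₁
      (lam • (1 : Matrix (Fin n) (Fin n) ℂ) - A₀ - Complex.exp (-lam * h) • A₁ -
        Matrix.of fun i j : Fin n => ∫ θ in (-h)..0, Complex.exp (lam * θ) * AD θ i j) = 0)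
    (heig₂ : Matrix.vecMul v₂
      (-lam • (1 : Matrix (Fin n) (Fin n) ℂ) - A₀ - Complex.exp (lam * h) • A₁ -
        Matrix.of fun i j : Fin n => ∫ θ in (-h)..0, Complex.exp (-lam * θ) * AD θ i j) = 0)
    (ω₁ : ℝ → Matrix (Fin n) (Fin n) ℂ)
    (hω₁ : ∀ τ : ℝ, ω₁ τ = Complex.exp (lam * τ) • Matrix.vecMulVec v₂ v₁) :
    ∀ (τ : ℝ) (i j : Fin n),
      HasDerivAt (fun t : ℝ => ω₁ t i j)
        ((ω₁ τ * A₀ + ω₁ (τ - h) * A₁ +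
          Matrix.of fun i j : Fin n => ∫ θ in (-h)..0, (ω₁ (τ + θ) * AD θ) i j) i j) τ :=
  stmt6_general A₀ A₁ AD hAD lam h v₁ v₂ heig₁ ω₁ hω₁
end
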